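/- Given a set of QRC₁ formulas Φ, sets of constants C ⊆ D, and pairs p, q such that p is Cl_C(Φ)-maximal consistent and q is Cl_D(Φ)-maximal consistent, we have pR̂q if and only if both: (i) for every formula ◇φ ∈ Cl_C(Φ), if φ∈q⁺ or ◇φ∈q⁺ then ◇φ∈p⁺; and (ii) there is a formula ◇ψ ∈ p⁺∩q⁻. -/

import Mathlib

/-- A signature: constants and relation symbols with arities (no function symbols). -/
structure Signature where
  Const : Type
  Rel : Type
  arity : Rel → ℕ

/-- Terms: variables (numbered) or constants. -/
inductive Term (Sig : Signature) : Type where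
  | var : ℕ → Term Sig
  | const : Sig.Const → Term Sig

/-- Strictly positive formulas of QRC₁. -/
inductive Formula (Sig : Signature) : Type where
  | top : Formula Sig
  | rel : (S : Sig.Rel) → (Fin (Sig.arity S) → Term Sig) → Formula Sig
  | and : Formula Sig → Formula Sig → Formula Sig
  | dia : Formula Sig → Formula Sig
  | all : ℕ → Formula Sig → Formula Sig

namespace Term

variable {Sig : Signature}

def fv : Term Sig → Set ℕ
  | var x => {x}
  | const _ => ∅

def consts : Term Sig → Set Sig.Const
  | var _ => ∅
  | const c => {c}

def subst (t : Term Sig) (x : ℕ) (u : Term Sig) : Term Sig :=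
  match t with
  | var y => if y = x then u else var y
  | const c => const c

end Term

namespace Formula

variable {Sig : Signature}

/-- Free variables of a formula. -/
def fv : Formula Sig → Set ℕ
  | top => ∅
  | rel _ ts => ⋃ i, (ts i).fv
  | and φ ψ => φ.fv ∪ ψ.fv
  | dia φ => φ.fv
  | all x φ => φ.fv \ {x}

/-- Constants occurring in a formula. -/
def consts : Formula Sig → Set Sig.Const
  | top => ∅
  | rel _ ts => ⋃ i, (ts i).consts
  | and φ ψ => φ.consts ∪ ψ.consts
  | dia φ => φ.consts
  | all _ φ => φ.consts

/-- Simultaneous substitution of the term `u` for the free occurrences of `x`. -/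
def subst : Formula Sig → ℕ → Term Sig → Formula Sig
  | top, _, _ => top
  | rel S ts, x, u => rel S (fun i => (ts i).subst x u)
  | and φ ψ, x, u => and (φ.subst x u) (ψ.subst x u)
  | dia φ, x, u => dia (φ.subst x u)
  | all y φ, x, u => if y = x then all y φ else all y (φ.subst x u)

/-- `t` is free for `x` in `φ`: no free variable of `t` becomes bound in `φ[x/t]`. -/
def freeFor : Formula Sig → ℕ → Term Sig → Prop
  | top, _, _ => True
  | rel _ _, _, _ => True
  | and φ ψ, x, t => φ.freeFor x t ∧ ψ.freeFor x t
  | dia φ, x, t => φ.freeFor x t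
  | all y φ, x, t => x ∉ (Formula.all y φ).fv ∨ (y ∉ t.fv ∧ φ.freeFor x t)

/-- Modal depth. -/
def mdepth : Formula Sig → ℕ
  | top => 0
  | rel _ _ => 0
  | and φ ψ => max φ.mdepth ψ.mdepth
  | dia φ => φ.mdepth + 1
  | all _ φ => φ.mdepth

def size : Formula Sig → ℕ
  | top => 1
  | rel _ _ => 1
  | and φ ψ => φ.size + ψ.size + 1
  | dia φ => φ.size + 1
  | all _ φ => φ.size + 1

theorem size_subst (φ : Formula Sig) (x : ℕ) (t : Term Sig) :
    (φ.subst x t).size = φ.size := by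
  induction φ with
  | top => rfl
  | rel S ts => rfl
  | and φ ψ ihφ ihψ => simp [Formula.subst, Formula.size, ihφ, ihψ]
  | dia φ ih => simp [Formula.subst, Formula.size, ih]
  | all y φ ih =>
      by_cases h : y = x <;> simp [Formula.subst, Formula.size, h, ih]

end Formula

/-- Derivability of sequents `φ ⊢ ψ` in QRC₁. -/
inductive Derives {Sig : Signature} : Formula Sig → Formula Sig → Prop where
  | topIntro (φ : Formula Sig) : Derives φ .top
  | refl (φ : Formula Sig) : Derives φ φ
  | andE₁ (φ ψ : Formula Sig) : Derives (.and φ ψ) φ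
  | andE₂ (φ ψ : Formula Sig) : Derives (.and φ ψ) ψ
  | andI {φ ψ χ : Formula Sig} : Derives φ ψ → Derives φ χ → Derives φ (.and ψ χ)
  | cut {φ ψ χ : Formula Sig} : Derives φ ψ → Derives ψ χ → Derives φ χ
  | nec {φ ψ : Formula Sig} : Derives φ ψ → Derives (.dia φ) (.dia ψ)
  | diaTrans (φ : Formula Sig) : Derives (.dia (.dia φ)) (.dia φ)
  | diaAll (x : ℕ) (φ : Formula Sig) : Derives (.dia (.all x φ)) (.all x (.dia φ))
  | allR {φ ψ : Formula Sig} {x : ℕ} : Derives φ ψ → x ∉ φ.fv → Derives φ (.all x ψ)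
  | allL {φ ψ : Formula Sig} {x : ℕ} {t : Term Sig} :
      Derives (φ.subst x t) ψ → φ.freeFor x t → Derives (.all x φ) ψ
  | termInst {φ ψ : Formula Sig} {x : ℕ} {t : Term Sig} :
      Derives φ ψ → φ.freeFor x t → ψ.freeFor x t →
      Derives (φ.subst x t) (ψ.subst x t)
  | constGen {φ ψ : Formula Sig} {x : ℕ} {c : Sig.Const} :
      Derives (φ.subst x (.const c)) (ψ.subst x (.const c)) →
      c ∉ φ.consts → c ∉ ψ.consts → Derives φ ψ

/-- Extension of a signature by a collection `C` of new constants. -/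
def Signature.extend (Sig : Signature) (C : Type) : Signature :=
  ⟨Sig.Const ⊕ C, Sig.Rel, Sig.arity⟩

/-- A term of `Sig` seen as a term of the extended signature. -/
def Term.lift {Sig : Signature} {C : Type} : Term Sig → Term (Sig.extend C)
  | .var x => .var x
  | .const c => .const (Sum.inl c)

/-- A formula of `Sig` seen as a formula of the extended signature. -/
def Formula.lift {Sig : Signature} {C : Type} : Formula Sig → Formula (Sig.extend C)
  | .top => .top
  | .rel S ts => .rel S (fun i => (ts i).lift)
  | .and φ ψ => .and φ.lift ψ.lift
  | .dia φ => .dia φ.lift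
  | .all x φ => .all x φ.lift

/-! ### Relational semantics -/

/-- A relational model (on an underlying frame `⟨W, R, D⟩`):
worlds, accessibility, finite domains, constant and relation interpretations. -/
structure Model (Sig : Signature) where
  W : Type
  U : Type
  nonempty : Nonempty W
  R : W → W → Prop
  D : W → Set U
  Dfin : ∀ w, (D w).Finite
  I : W → Sig.Const → U
  Imem : ∀ w c, I w c ∈ D w
  J : (w : W) → (S : Sig.Rel) → Set (Fin (Sig.arity S) → U)
  Jmem : ∀ w S f, f ∈ J w S → ∀ i, f i ∈ D w

namespace Model

variable {Sig : Signature}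

/-- A `w`-assignment: a map from variables into the domain of `w`. -/
def IsAssignment (M : Model Sig) (w : M.W) (g : ℕ → M.U) : Prop :=
  ∀ n, g n ∈ M.D w

/-- Value of a term at a world under an assignment. -/
def tval (M : Model Sig) (w : M.W) (g : ℕ → M.U) : Term Sig → M.U
  | .var x => g x
  | .const c => M.I w c

end Model

/-- `Γ`-alternative assignments: they agree on all variables outside `Γ`. -/
def AltOn {U : Type} (Γ : Set ℕ) (g h : ℕ → U) : Prop :=
  ∀ y, y ∉ Γ → g y = h y

/-- Truth at a world under an assignment. -/
def Model.Forces {Sig : Signature} (M : Model Sig) :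
    M.W → (ℕ → M.U) → Formula Sig → Prop
  | _, _, .top => True
  | w, g, .rel S ts => (fun i => M.tval w g (ts i)) ∈ M.J w S
  | w, g, .and φ ψ => M.Forces w g φ ∧ M.Forces w g ψ
  | w, g, .dia φ => ∃ v, M.R w v ∧ M.Forces v g φ
  | w, g, .all x φ =>
      ∀ h : ℕ → M.U, M.IsAssignment w h → AltOn {x} g h → M.Forces w h φ

/-- Adequate models: inclusive, transitive, and concordant. -/
def Model.Adequate {Sig : Signature} (M : Model Sig) : Prop :=
  (∀ w u, M.R w u → M.D w ⊆ M.D u) ∧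
  (∀ w u v, M.R w u → M.R u v → M.R w v) ∧
  (∀ w u, M.R w u → ∀ c, M.I w c = M.I u c)

/-- The model `M` restricted at the world `r`. -/
def Model.restrict {Sig : Signature} (M : Model Sig) (r : M.W) : Model Sig where
  W := {w : M.W // w = r ∨ M.R r w}
  U := M.U
  nonempty := ⟨⟨r, Or.inl rfl⟩⟩
  R w v := M.R w.1 v.1
  D w := M.D w.1
  Dfin w := M.Dfin w.1
  I w c := M.I w.1 c
  Imem w c := M.Imem w.1 c
  J w S := M.J w.1 S
  Jmem w S f h i := M.Jmem w.1 S f h i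

/-- The model `M` restricted at `r`, with the interpretation of the constant `c`
set to `d ∈ M_r` at every world. -/
noncomputable def Model.restrictSubst {Sig : Signature} (M : Model Sig) (r : M.W) (c : Sig.Const)
    (d : M.U) (hd : d ∈ M.D r) (hinc : ∀ w u, M.R w u → M.D w ⊆ M.D u) : Model Sig :=
  { M.restrict r with
    I := fun w c' => @ite _ (c' = c) (Classical.propDecidable _) d (M.I w.1 c')
    Imem := by
      intro w c'
      by_cases h : c' = c
      · simp only [h, if_pos rfl]
        rcases w.2 with h' | h'
        · show d ∈ M.D w.1; rw [h']; exact hd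
        · exact hinc r w.1 h' hd
      · show @ite _ (c' = c) (Classical.propDecidable _) d (M.I w.1 c') ∈ M.D w.1
        rw [@if_neg (c' = c) (Classical.propDecidable _) h]
        exact M.Imem w.1 c' }

/-! ### Pairs, closure, maximal consistency -/

/-- A pair of sets of formulas (positive and negative part). -/
structure Pair (Sig : Signature) where
  pos : Set (Formula Sig)
  neg : Set (Formula Sig)

/-- `Γ ⊢ φ`: some finite conjunction of members of `Γ` derives `φ`. -/
def SetDerives {Sig : Signature} (Γ : Set (Formula Sig)) (φ : Formula Sig) : Prop :=
  ∃ (γ : Formula Sig) (l : List (Formula Sig)),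
    γ ∈ Γ ∧ (∀ δ ∈ l, δ ∈ Γ) ∧ Derives (l.foldl Formula.and γ) φ

namespace Pair

variable {Sig : Signature}

/-- A pair is consistent if no member of the negative part follows from the positive part. -/
def Consistent (p : Pair Sig) : Prop :=
  ∀ δ ∈ p.neg, ¬ SetDerives p.pos δ

/-- `q` is a `Φ`-extension of `p`. -/
def Ext (p q : Pair Sig) (Φ : Set (Formula Sig)) : Prop :=
  p.pos ⊆ q.pos ∧ q.pos ⊆ Φ ∧ p.neg ⊆ q.neg ∧ q.neg ⊆ Φ

/-- `Φ`-maximal consistency. -/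
def MaxCons (p : Pair Sig) (Φ : Set (Formula Sig)) : Prop :=
  p.Consistent ∧ p.pos ⊆ Φ ∧ p.neg ⊆ Φ ∧
    ∀ q : Pair Sig, p.Ext q Φ → q.Consistent → q = p

/-- A pair is fully witnessed if every negative universal has a constant witness. -/
def FullyWitnessed (p : Pair Sig) : Prop :=
  ∀ (x : ℕ) (φ : Formula Sig), Formula.all x φ ∈ p.neg →
    ∃ c : Sig.Const, φ.subst x (.const c) ∈ p.neg

end Pair

/-- Closure of a formula under a set of constants. -/
def Cl {Sig : Signature} (C : Set Sig.Const) : Formula Sig → Set (Formula Sig)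
  | .top => {.top}
  | .rel S ts => {.rel S ts, .top}
  | .and φ ψ => {.and φ ψ} ∪ Cl C φ ∪ Cl C ψ
  | .dia φ => {.dia φ} ∪ Cl C φ
  | .all x φ => {.all x φ} ∪ ⋃ c ∈ C, Cl C (φ.subst x (.const c))
termination_by φ => φ.size
decreasing_by
  all_goals simp [Formula.size, Formula.size_subst]
  all_goals omega

/-- Closure of a set of formulas under a set of constants. -/
def ClSet {Sig : Signature} (C : Set Sig.Const) (Γ : Set (Formula Sig)) :
    Set (Formula Sig) :=
  ⋃ φ ∈ Γ, Cl C φ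

/-- Modal depth of a set of formulas (as a supremum in ℕ). -/
noncomputable def mdepthSet {Sig : Signature} (Γ : Set (Formula Sig)) : ℕ :=
  sSup (Formula.mdepth '' Γ)

/-- The relation `R̂` between pairs. -/
def hatR {Sig : Signature} (p q : Pair Sig) : Prop :=
  (∀ φ : Formula Sig, Formula.dia φ ∈ p.neg → φ ∈ q.neg ∧ Formula.dia φ ∈ q.neg) ∧
  (∃ ψ : Formula Sig, Formula.dia ψ ∈ p.pos ∧ Formula.dia ψ ∈ q.neg)

/-! Maximal consistent pairs decide every formula of their domain `Φ`: if `φ ∈ Φ` is not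
negative, maximality makes `p⁺ ⊢ φ`, and by cut `p⁺` is deductively closed within `Φ`. Hence
membership in `p⁻` is exactly non-membership in `p⁺`, and condition (i) is the contrapositive of
the first clause of `R̂`. For the converse one needs `φ` and `◇φ` to be decided by `q`, which holds
because `Cl_C(Φ) ⊆ Cl_D(Φ)` and closures are closed under removing a diamond. -/

variable {Sig : Signature}

namespace Derives

theorem foldl_and_left (γ : Formula Sig) (l : List (Formula Sig)) :
    Derives (l.foldl .and γ) γ := by
  induction l generalizing γ with
  | nil => exact .refl γ
  | cons a l ih => exact .cut (ih (γ.and a)) (.andE₁ _ _)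

theorem foldl_and_of_mem (γ : Formula Sig) {l : List (Formula Sig)} {x : Formula Sig}
    (hx : x ∈ l) : Derives (l.foldl .and γ) x := by
  induction l generalizing γ with
  | nil => cases hx
  | cons a l ih =>
    cases hx with
    | head => exact .cut (foldl_and_left (γ.and x) _) (.andE₂ γ x)
    | tail _ hx => exact ih _ hx

theorem foldl_and_intro {χ γ : Formula Sig} {l : List (Formula Sig)}
    (hγ : Derives χ γ) (hl : ∀ x ∈ l, Derives χ x) : Derives χ (l.foldl .and γ) := by
  induction l generalizing γ with
  | nil => exact hγ
  | cons a l ih => exact ih (.andI hγ (hl a (.head _))) (fun x hx => hl x (.tail _ hx))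

end Derives

namespace SetDerives

theorem of_mem {Γ : Set (Formula Sig)} {φ : Formula Sig} (h : φ ∈ Γ) : SetDerives Γ φ :=
  ⟨φ, [], h, by simp, .refl φ⟩

theorem cut {Γ : Set (Formula Sig)} {φ δ : Formula Sig}
    (hφ : SetDerives Γ φ) (hδ : SetDerives (insert φ Γ) δ) : SetDerives Γ δ := by
  classical
  obtain ⟨γ₁, l₁, hγ₁, hl₁, d₁⟩ := hφ
  obtain ⟨γ₂, l₂, hγ₂, hl₂, d₂⟩ := hδ
  -- the premises of the second derivation other than `φ` are added to those of the first
  set L := (γ₂ :: l₂).filter (· ≠ φ)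
  have hL : ∀ y ∈ L, y ∈ Γ := by
    intro y hy
    obtain ⟨hy, hyφ⟩ := List.mem_filter.1 hy
    have : y ∈ insert φ Γ := by
      rcases List.mem_cons.1 hy with rfl | hy
      exacts [hγ₂, hl₂ y hy]
    exact this.resolve_left (by simpa using hyφ)
  refine ⟨γ₁, l₁ ++ L, hγ₁, fun y hy => (List.mem_append.1 hy).elim (hl₁ y) (hL y), ?_⟩
  have hprem : ∀ y ∈ γ₂ :: l₂, Derives ((l₁ ++ L).foldl .and γ₁) y := by
    intro y hy
    by_cases hyφ : y = φ
    · subst hyφ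
      rw [List.foldl_append]
      exact .cut (Derives.foldl_and_left _ _) d₁
    · exact Derives.foldl_and_of_mem _
        (List.mem_append_right _ (List.mem_filter.2 ⟨hy, by simpa using hyφ⟩))
  exact .cut (Derives.foldl_and_intro (hprem γ₂ (.head _)) fun x hx => hprem x (.tail _ hx)) d₂

end SetDerives

namespace Pair

variable {p : Pair Sig} {Φ : Set (Formula Sig)} {φ : Formula Sig}

theorem Consistent.not_mem_pos_of_mem_neg (hp : p.Consistent) (h : φ ∈ p.neg) : φ ∉ p.pos :=
  fun hpos => hp φ h (.of_mem hpos)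

theorem MaxCons.mem_pos_of_setDerives (hp : p.MaxCons Φ) (hφ : φ ∈ Φ)
    (h : SetDerives p.pos φ) : φ ∈ p.pos := by
  obtain ⟨hcons, hposΦ, hnegΦ, hmax⟩ := hp
  have hext : p.Ext ⟨insert φ p.pos, p.neg⟩ Φ :=
    ⟨Set.subset_insert _ _, Set.insert_subset hφ hposΦ, subset_rfl, hnegΦ⟩
  have hcons' : Pair.Consistent ⟨insert φ p.pos, p.neg⟩ :=
    fun δ hδ hd => hcons δ hδ (h.cut hd)
  rw [← hmax _ hext hcons']
  exact Set.mem_insert φ p.pos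

theorem MaxCons.setDerives_of_not_mem_neg (hp : p.MaxCons Φ) (hφ : φ ∈ Φ)
    (h : φ ∉ p.neg) : SetDerives p.pos φ := by
  obtain ⟨hcons, hposΦ, hnegΦ, hmax⟩ := hp
  by_contra hd
  have hext : p.Ext ⟨p.pos, insert φ p.neg⟩ Φ :=
    ⟨subset_rfl, hposΦ, Set.subset_insert _ _, Set.insert_subset hφ hnegΦ⟩
  have hcons' : Pair.Consistent ⟨p.pos, insert φ p.neg⟩ := by
    rintro δ (rfl | hδ)
    exacts [hd, hcons δ hδ]
  apply h
  rw [← hmax _ hext hcons']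
  exact Set.mem_insert φ p.neg

theorem MaxCons.mem_neg_of_not_mem_pos (hp : p.MaxCons Φ) (hφ : φ ∈ Φ) (h : φ ∉ p.pos) :
    φ ∈ p.neg :=
  by_contra fun hneg => h (hp.mem_pos_of_setDerives hφ (hp.setDerives_of_not_mem_neg hφ hneg))

end Pair

theorem mem_cl_self (C : Set Sig.Const) (φ : Formula Sig) : φ ∈ Cl C φ := by
  cases φ <;> rw [Cl] <;> simp

theorem cl_mono {C D : Set Sig.Const} (h : C ⊆ D) (φ : Formula Sig) : Cl C φ ⊆ Cl D φ := by
  intro ψ hψ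
  induction φ using Cl.induct with
  | case1 | case2 => rwa [Cl] at hψ ⊢
  | case3 φ₁ φ₂ ih₁ ih₂ =>
    rw [Cl] at hψ ⊢
    rcases hψ with (hψ | hψ) | hψ
    exacts [.inl (.inl hψ), .inl (.inr (ih₁ hψ)), .inr (ih₂ hψ)]
  | case4 φ₁ ih =>
    rw [Cl] at hψ ⊢
    exact hψ.imp id ih
  | case5 x φ₁ ih =>
    rw [Cl] at hψ ⊢
    simp only [Set.mem_union, Set.mem_iUnion] at hψ ⊢
    exact hψ.imp id fun ⟨c, hc, hψ⟩ => ⟨c, h hc, ih c hψ⟩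

theorem mem_cl_of_dia_mem_cl {C : Set Sig.Const} {φ ψ : Formula Sig}
    (h : Formula.dia φ ∈ Cl C ψ) : φ ∈ Cl C ψ := by
  induction ψ using Cl.induct with
  | case1 | case2 => rw [Cl] at h; simp at h
  | case3 φ₁ φ₂ ih₁ ih₂ =>
    rw [Cl] at h ⊢
    rcases h with (h | h) | h
    exacts [by simp at h, .inl (.inr (ih₁ h)), .inr (ih₂ h)]
  | case4 φ₁ ih =>
    rw [Cl] at h ⊢
    rcases h with h | h
    · cases h
      exact .inr (mem_cl_self _ _)
    · exact .inr (ih h)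
  | case5 x φ₁ ih =>
    rw [Cl] at h ⊢
    simp only [Set.mem_union, Set.mem_iUnion, Set.mem_singleton_iff] at h ⊢
    rcases h with h | ⟨c, hc, h⟩
    exacts [by simp at h, .inr ⟨c, hc, ih c h⟩]

theorem clSet_mono {C D : Set Sig.Const} (h : C ⊆ D) (Γ : Set (Formula Sig)) :
    ClSet C Γ ⊆ ClSet D Γ :=
  Set.biUnion_mono subset_rfl fun φ _ => cl_mono h φ

theorem mem_clSet_of_dia_mem_clSet {C : Set Sig.Const} {Γ : Set (Formula Sig)}
    {φ : Formula Sig} (h : Formula.dia φ ∈ ClSet C Γ) : φ ∈ ClSet C Γ := by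
  simp only [ClSet, Set.mem_iUnion] at h ⊢
  obtain ⟨ψ, hψ, h⟩ := h
  exact ⟨ψ, hψ, mem_cl_of_dia_mem_cl h⟩

/-- Characterization of R̂ via positive parts, for p Cl_C(Φ)-maximal
consistent and q Cl_D(Φ)-maximal consistent with C ⊆ D. -/
theorem hatR_pos_characterization (Sig : Signature) (Φ : Set (Formula Sig))
    (C D : Set Sig.Const) (hCD : C ⊆ D) (p q : Pair Sig)
    (hp : p.MaxCons (ClSet C Φ)) (hq : q.MaxCons (ClSet D Φ)) :
    hatR p q ↔
      ((∀ φ : Formula Sig, Formula.dia φ ∈ ClSet C Φ →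
          (φ ∈ q.pos ∨ Formula.dia φ ∈ q.pos) → Formula.dia φ ∈ p.pos) ∧
       ∃ ψ : Formula Sig, Formula.dia ψ ∈ p.pos ∧ Formula.dia ψ ∈ q.neg) := by
  refine and_congr_left fun _ => ⟨fun hneg φ hφ hqφ => ?_, fun hpos φ hφ => ?_⟩
  · by_contra hnot
    obtain ⟨hφq, hdφq⟩ := hneg φ (hp.mem_neg_of_not_mem_pos hφ hnot)
    exact hqφ.elim (hq.1.not_mem_pos_of_mem_neg hφq) (hq.1.not_mem_pos_of_mem_neg hdφq)
  · have hφC : Formula.dia φ ∈ ClSet C Φ := hp.2.2.1 hφ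
    have hφD : Formula.dia φ ∈ ClSet D Φ := clSet_mono hCD Φ hφC
    have hnp : Formula.dia φ ∉ p.pos := hp.1.not_mem_pos_of_mem_neg hφ
    exact ⟨hq.mem_neg_of_not_mem_pos (mem_clSet_of_dia_mem_clSet hφD)
        fun h => hnp (hpos φ hφC (.inl h)),
      hq.mem_neg_of_not_mem_pos hφD fun h => hnp (hpos φ hφC (.inr h))⟩
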